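/- arXiv:1509.06994 — 5 statements merged into one kernel-verified Lean document; each statement's English description precedes it below -/
import Mathlib

section
/- Suppose that for a stationary random simple graph on ℤ with degree distribution F, the expected total length T of the edges at the origin is finite. Then F has finite second moment. -/
open MeasureTheory ENNReal

namespace Finset

lemma card_le_two_mul_of_natAbs_sub_le {S : Finset ℤ} {c : ℤ} (hc : c ∉ S) {m : ℕ}
    (hm : ∀ j ∈ S, (j - c).natAbs ≤ m) : #S ≤ 2 * m := by
  have hsub : S ⊆ (Icc (c - m) (c + m)).erase c := fun j hj =>
    mem_erase.mpr ⟨fun h => hc (h ▸ hj), mem_Icc.mpr (by have := hm j hj; omega)⟩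
  calc #S ≤ #((Icc (c - m) (c + m)).erase c) := card_le_card hsub
    _ = 2 * m := by
      rw [card_erase_of_mem (mem_Icc.mpr (by omega)), Int.card_Icc]
      omega

/-- A point `k` farthest from `c` has `#S ≤ 2 * |k - c|`, so removing it lowers the right side
by at least `2 * #S`, more than the `2 * #S - 1` the left side loses. -/
lemma card_sq_le_four_mul_sum_natAbs_sub_add_one (S : Finset ℤ) {c : ℤ} (hc : c ∉ S) :
    #S ^ 2 ≤ 4 * ∑ j ∈ S, (j - c).natAbs + 1 := by
  induction S using Finset.strongInduction with
  | _ S ih =>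
    rcases S.eq_empty_or_nonempty with rfl | hne
    · simp
    obtain ⟨k, hk, hk_max⟩ := S.exists_max_image (fun j => (j - c).natAbs) hne
    have h_erase := ih (S.erase k) (erase_ssubset hk) (fun h => hc (mem_of_mem_erase h))
    have h_card : #S ≤ 2 * (k - c).natAbs := card_le_two_mul_of_natAbs_sub_le hc hk_max
    rw [card_erase_of_mem hk] at h_erase
    rw [← add_sum_erase S _ hk]
    have h_pos := hne.card_pos
    obtain ⟨n, hn⟩ : ∃ n, #S = n + 1 := ⟨#S - 1, by omega⟩
    rw [hn] at h_erase h_card ⊢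
    simp only [Nat.add_sub_cancel] at h_erase
    nlinarith

end Finset

lemma Set.encard_sq_le_four_mul_tsum_natAbs_sub_add_one {s : Set ℤ} {c : ℤ} (hc : c ∉ s) :
    (s.encard : ℝ≥0∞) ^ 2 ≤ 4 * ∑' j : s, ((j - c : ℤ).natAbs : ℝ≥0∞) + 1 := by
  rcases s.finite_or_infinite with hs | hs
  · obtain ⟨S, rfl⟩ := hs.exists_finset_coe
    rw [encard_coe_eq_coe_finsetCard, ENat.toENNReal_coe,
      Finset.tsum_subtype' S fun j => ((j - c).natAbs : ℝ≥0∞)]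
    exact_mod_cast S.card_sq_le_four_mul_sum_natAbs_sub_add_one hc
  · have : Infinite s := hs.to_subtype
    have h_top : ∑' j : s, ((j - c : ℤ).natAbs : ℝ≥0∞) = ⊤ := by
      refine top_le_iff.mp ((ENNReal.tsum_const_eq_top_of_ne_zero one_ne_zero).symm.le.trans
        (ENNReal.tsum_le_tsum fun j => ?_))
      have hjc : (j : ℤ) ≠ c := fun h => hc (h ▸ j.2)
      exact_mod_cast Int.natAbs_pos.mpr (sub_ne_zero.mpr hjc)
    simp [h_top]

/-- If, for a random simple graph on ℤ, the expected total length of the edges at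
the origin is finite, then the degree of the origin has finite second moment. -/
theorem stmt4 {Ω : Type*} [MeasurableSpace Ω] (ℙ : Measure Ω) [IsProbabilityMeasure ℙ]
    (G : Ω → SimpleGraph ℤ)
    (D : Ω → ℕ) (hD : ∀ ω, (D ω : ℕ∞) = ((G ω).neighborSet 0).encard)
    (T : Ω → ℝ≥0∞) (hT : ∀ ω, T ω = ∑' j : ((G ω).neighborSet 0), ((j : ℤ).natAbs : ℝ≥0∞))
    (hTfin : ∫⁻ ω, T ω ∂ℙ < ∞) :
    ∫⁻ ω, ((D ω : ℝ≥0∞)) ^ 2 ∂ℙ < ∞ := by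
  have h_pointwise : ∀ ω, (D ω : ℝ≥0∞) ^ 2 ≤ 4 * T ω + 1 := fun ω => by
    have h_bound := Set.encard_sq_le_four_mul_tsum_natAbs_sub_add_one
      ((G ω).notMem_neighborSet_self (a := 0))
    simp only [← hD, ENat.toENNReal_coe, sub_zero, ← hT] at h_bound
    exact h_bound
  calc ∫⁻ ω, (D ω : ℝ≥0∞) ^ 2 ∂ℙ
      ≤ ∫⁻ ω, 4 * T ω + 1 ∂ℙ := lintegral_mono h_pointwise
    _ = 4 * ∫⁻ ω, T ω ∂ℙ + 1 := by
      rw [lintegral_add_right _ measurable_const, lintegral_const_mul' _ _ (by norm_num),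
        lintegral_const, measure_univ, mul_one]
    _ < ∞ := add_lt_top.mpr ⟨mul_lt_top (by norm_num) hTfin, one_lt_top⟩
end

section
/- Fix d ≥ 1 and a configuration (D_i^d)_{i∈ℤ} of non-negative integers ('bad stubs'). Say vertex i is claimed if Σ_{k=i−m}^{i+m} D_k^d ≥ m for some m ≥ 1. Let C = {i+1, …, i+n} be a cluster of claimed vertices, i.e., all of i+1,…,i+n are claimed but i and i+n+1 are not claimed. Then Σ_{k∈C} D_k^d ≤ n − 1 = |C| − 1. -/
theorem stmt8_general (D : ℤ → ℕ)
    (claimed : ℤ → Prop)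
    (hcl : ∀ i : ℤ, claimed i ↔
      ∃ m : ℕ, 1 ≤ m ∧ m ≤ ∑ k ∈ Finset.Icc (i - (m : ℤ)) (i + (m : ℤ)), D k)
    (i : ℤ) (n : ℕ) (hn : 1 ≤ n)
    (hi : ¬ claimed i) :
    ∑ k ∈ Finset.Icc (i + 1) (i + (n : ℤ)), D k ≤ n - 1 := by
  have hwindow : ∑ k ∈ Finset.Icc (i - (n : ℤ)) (i + (n : ℤ)), D k < n := by
    by_contra! h
    exact hi ((hcl i).2 ⟨n, hn, h⟩)
  have hsub : Finset.Icc (i + 1) (i + (n : ℤ)) ⊆ Finset.Icc (i - (n : ℤ)) (i + (n : ℤ)) :=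
    Finset.Icc_subset_Icc (by omega) le_rfl
  have := (Finset.sum_le_sum_of_subset hsub).trans_lt hwindow
  omega

/-- In a cluster of claimed vertices, the total number of bad stubs is at most
the cluster size minus one. -/
theorem stmt8 (d : ℕ) (hd : 1 ≤ d) (D : ℤ → ℕ)
    (claimed : ℤ → Prop)
    (hcl : ∀ i : ℤ, claimed i ↔
      ∃ m : ℕ, 1 ≤ m ∧ m ≤ ∑ k ∈ Finset.Icc (i - (m : ℤ)) (i + (m : ℤ)), D k)
    (i : ℤ) (n : ℕ) (hn : 1 ≤ n)
    (hC : ∀ j ∈ Finset.Icc (i + 1) (i + (n : ℤ)), claimed j)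
    (hi : ¬ claimed i) (hin : ¬ claimed (i + (n : ℤ) + 1)) :
    ∑ k ∈ Finset.Icc (i + 1) (i + (n : ℤ)), D k ≤ n - 1 :=
  stmt8_general D claimed hcl i n hn hi
end

section
/- Fix α > 0, d ≥ 1, and a configuration (D_i^d)_{i∈ℤ} of non-negative reals. Say vertex i is α-claimed if Σ_{k=i−m}^{i+m} D_k^d ≥ α m for some m ≥ 1. If the α-claimed cluster of the origin (the maximal interval of consecutive α-claimed vertices containing 0) has size at least n, then there exists m ≥ n with Σ_{k=−m}^{m} D_k^d ≥ α m / 6. -/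
/-!
Each vertex `c` of the cluster `[a, b]` carries an interval `[c - r c, c + r c]` of mass at least
`α * r c`. Thin this cover to a subcover in which every point lies in at most two intervals and
let `U` be its union and `R` the sum of its radii. Counting with multiplicity,
`α * R ≤ 2 * ∑ k ∈ U, D k`, while `#U ≤ ∑ (2 * r c + 1) ≤ 3 * R`. Since `U ⊇ [a, b] ∋ 0` is an
interval, `b - a + 1 ≤ #U` and `U ⊆ [-#U, #U]`, so `m = 3 * R` works.
-/

open Finset

section IntervalCover

variable {α ι : Type*} [LinearOrder α] [LocallyFiniteOrder α] (l u : ι → α)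

theorem Finset.Icc_subset_Icc_union_Icc_of_mem {a b c d e f x : α}
    (hab : x ∈ Icc a b) (hcd : x ∈ Icc c d) (hae : a ≤ e) (hfd : f ≤ d) :
    Icc e f ⊆ Icc a b ∪ Icc c d := by
  intro y hy
  simp only [mem_Icc, mem_union] at hab hcd hy ⊢
  rcases le_total y x with hyx | hxy
  · exact Or.inl ⟨hae.trans hy.1, hyx.trans hab.2⟩
  · exact Or.inr ⟨hcd.1.trans hxy, hy.2.trans hfd⟩

variable [DecidableEq ι]

/-- Among three intervals through a common point, one that has neither the leftmost left end
nor the rightmost right end is covered by the other two. -/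
theorem exists_Icc_subset_biUnion_erase {t : Finset ι} {x : α}
    (hx : 2 < #{i ∈ t | x ∈ Icc (l i) (u i)}) :
    ∃ k ∈ t, Icc (l k) (u k) ⊆ (t.erase k).biUnion fun i => Icc (l i) (u i) := by
  set T := {i ∈ t | x ∈ Icc (l i) (u i)}
  have hT : T.Nonempty := card_pos.mp (by omega)
  obtain ⟨i, hiT, hi⟩ := T.exists_min_image l hT
  obtain ⟨j, hjT, hj⟩ := T.exists_max_image u hT
  obtain ⟨k, hk⟩ : (T \ {i, j}).Nonempty := by
    rw [← card_pos]
    have := card_le_card_sdiff_add_card (s := T) (t := {i, j})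
    have := card_le_two (a := i) (b := j)
    omega
  simp only [mem_sdiff, mem_insert, mem_singleton, not_or] at hk
  obtain ⟨hkT, hk⟩ := hk
  have mem_T {m} (hm : m ∈ T) : m ∈ t ∧ x ∈ Icc (l m) (u m) := mem_filter.mp hm
  refine ⟨k, (mem_T hkT).1, ?_⟩
  intro y hy
  replace hy := Icc_subset_Icc_union_Icc_of_mem (mem_T hiT).2 (mem_T hjT).2 (hi k hkT) (hj k hkT) hy
  rcases mem_union.mp hy with hy | hy
  · exact mem_biUnion.mpr ⟨i, mem_erase.mpr ⟨Ne.symm hk.1, (mem_T hiT).1⟩, hy⟩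
  · exact mem_biUnion.mpr ⟨j, mem_erase.mpr ⟨Ne.symm hk.2, (mem_T hjT).1⟩, hy⟩

theorem exists_subfamily_biUnion_eq_card_mem_le_two (s : Finset ι) :
    ∃ t ⊆ s, (t.biUnion fun i => Icc (l i) (u i)) = s.biUnion (fun i => Icc (l i) (u i)) ∧
      ∀ x, #{i ∈ t | x ∈ Icc (l i) (u i)} ≤ 2 := by
  induction s using Finset.strongInduction with
  | H s ih =>
    by_cases hs : ∀ x, #{i ∈ s | x ∈ Icc (l i) (u i)} ≤ 2
    · exact ⟨s, subset_rfl, rfl, hs⟩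
    push Not at hs
    obtain ⟨x, hx⟩ := hs
    obtain ⟨k, hks, hk⟩ := exists_Icc_subset_biUnion_erase l u hx
    obtain ⟨t, hts, htU, ht⟩ := ih (s.erase k) (erase_ssubset hks)
    refine ⟨t, hts.trans (erase_subset k s), ?_, ht⟩
    rw [htU, ← insert_erase hks, biUnion_insert, erase_insert (notMem_erase k s),
      union_eq_right.mpr hk]

end IntervalCover

theorem Finset.sum_sum_le_mul_sum_biUnion {ι β R : Type*} [DecidableEq β]
    [CommSemiring R] [PartialOrder R] [IsOrderedRing R]
    {t : Finset ι} {J : ι → Finset β} {f : β → R} (hf : ∀ k, 0 ≤ f k) {N : ℕ}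
    (hN : ∀ k, #{i ∈ t | k ∈ J i} ≤ N) :
    ∑ i ∈ t, ∑ k ∈ J i, f k ≤ N * ∑ k ∈ t.biUnion J, f k := by
  calc ∑ i ∈ t, ∑ k ∈ J i, f k = ∑ k ∈ t.biUnion J, ∑ i ∈ t with k ∈ J i, f k :=
        sum_comm' fun i k => by simp only [mem_biUnion, mem_filter]; tauto
    _ = ∑ k ∈ t.biUnion J, #{i ∈ t | k ∈ J i} • f k := by simp only [sum_const]
    _ ≤ ∑ k ∈ t.biUnion J, N • f k := sum_le_sum fun k _ => nsmul_le_nsmul_left (hf k) (hN k)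
    _ = N * ∑ k ∈ t.biUnion J, f k := by rw [← smul_sum, nsmul_eq_mul]

theorem Finset.subset_Icc_neg_card {U : Finset ℤ} (hU : ∀ k ∈ U, uIcc 0 k ⊆ U) :
    U ⊆ Icc (-#U : ℤ) #U := by
  intro k hk
  have := card_le_card (hU k hk)
  rw [Int.card_uIcc] at this
  rw [mem_Icc]
  omega

theorem uIcc_zero_subset_biUnion_Icc {a b : ℤ} (ha : a ≤ 0) (hb : 0 ≤ b) {l u : ℤ → ℤ}
    (hlu : ∀ c, l c ≤ c ∧ c ≤ u c) :
    ∀ k ∈ (Icc a b).biUnion fun c => Icc (l c) (u c),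
      uIcc 0 k ⊆ (Icc a b).biUnion fun c => Icc (l c) (u c) := by
  intro k hk y hy
  obtain ⟨c, hc, hkc⟩ := mem_biUnion.mp hk
  simp only [mem_Icc, mem_uIcc] at hc hkc hy
  by_cases hyab : a ≤ y ∧ y ≤ b
  · exact mem_biUnion.mpr ⟨y, mem_Icc.mpr hyab, mem_Icc.mpr (hlu y)⟩
  · refine mem_biUnion.mpr ⟨c, mem_Icc.mpr hc, mem_Icc.mpr ?_⟩
    have := hlu c
    omega

theorem card_biUnion_Icc_le_three_mul_sum {t : Finset ℤ} {r : ℤ → ℕ} (hr : ∀ c ∈ t, 1 ≤ r c) :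
    #(t.biUnion fun c => Icc (c - r c) (c + r c)) ≤ 3 * ∑ c ∈ t, r c := by
  refine card_biUnion_le.trans ?_
  rw [mul_sum]
  refine sum_le_sum fun c hc => ?_
  have := hr c hc
  simp only [Int.card_Icc]
  omega

theorem exists_sum_Icc_neg_ge_of_forall_sum_Icc_ge {α : ℝ} {D : ℤ → ℝ} (hD : ∀ k, 0 ≤ D k)
    {a b : ℤ} (ha : a ≤ 0) (hb : 0 ≤ b) {r : ℤ → ℕ} (hr : ∀ c ∈ Icc a b, 1 ≤ r c)
    (hmass : ∀ c ∈ Icc a b, α * r c ≤ ∑ k ∈ Icc (c - r c) (c + r c), D k) :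
    ∃ m : ℕ, b - a + 1 ≤ m ∧ α * m / 6 ≤ ∑ k ∈ Icc (-(m : ℤ)) m, D k := by
  obtain ⟨t, hts, htU, hmult⟩ :=
    exists_subfamily_biUnion_eq_card_mem_le_two (fun c => c - r c) (fun c => c + r c) (Icc a b)
  set U := t.biUnion fun c => Icc (c - r c) (c + r c)
  set R := ∑ c ∈ t, r c
  have hUR : #U ≤ 3 * R := card_biUnion_Icc_le_three_mul_sum fun c hc => hr c (hts hc)
  have hRU : α * R ≤ 2 * ∑ k ∈ U, D k := by
    calc α * R = ∑ c ∈ t, α * r c := by simp only [R, Nat.cast_sum, mul_sum]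
      _ ≤ ∑ c ∈ t, ∑ k ∈ Icc (c - r c) (c + r c), D k :=
        sum_le_sum fun c hc => hmass c (hts hc)
      _ ≤ 2 * ∑ k ∈ U, D k := by exact_mod_cast sum_sum_le_mul_sum_biUnion hD hmult
  have hU : U ⊆ Icc (-#U : ℤ) #U := by
    refine subset_Icc_neg_card ?_
    rw [htU]
    exact uIcc_zero_subset_biUnion_Icc ha hb fun c => by omega
  have habU : Icc a b ⊆ U := by
    rw [htU]
    exact fun c hc => mem_biUnion.mpr ⟨c, hc, by simp⟩
  refine ⟨3 * R, ?_, ?_⟩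
  · have := card_le_card habU
    rw [Int.card_Icc] at this
    omega
  · calc α * ↑(3 * R) / 6 = α * R / 2 := by push_cast; ring
      _ ≤ ∑ k ∈ U, D k := by linarith
      _ ≤ ∑ k ∈ Icc (-((3 * R : ℕ) : ℤ)) (3 * R : ℕ), D k :=
        sum_le_sum_of_subset_of_nonneg (hU.trans (Icc_subset_Icc (by omega) (by omega)))
          fun k _ _ => hD k

theorem stmt9_general (α : ℝ)
    (D : ℤ → ℝ) (hD : ∀ k, 0 ≤ D k)
    (claimed : ℤ → Prop)
    (hcl : ∀ i : ℤ, claimed i ↔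
      ∃ m : ℕ, 1 ≤ m ∧ α * m ≤ ∑ k ∈ Finset.Icc (i - (m : ℤ)) (i + (m : ℤ)), D k)
    (n : ℕ) (a b : ℤ) (ha : a ≤ 0) (hb : 0 ≤ b)
    (hclu : ∀ j ∈ Finset.Icc a b, claimed j)
    (hsize : (n : ℤ) ≤ b - a + 1) :
    ∃ m : ℕ, n ≤ m ∧ α * m / 6 ≤ ∑ k ∈ Finset.Icc (-(m : ℤ)) (m : ℤ), D k := by
  have hradius (c : ℤ) :
      ∃ r : ℕ, c ∈ Icc a b → 1 ≤ r ∧ α * r ≤ ∑ k ∈ Icc (c - r) (c + r), D k := by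
    by_cases hc : c ∈ Icc a b
    · obtain ⟨r, hr⟩ := (hcl c).1 (hclu c hc)
      exact ⟨r, fun _ => hr⟩
    · exact ⟨0, fun h => absurd h hc⟩
  choose r hr using hradius
  obtain ⟨m, hm, hsum⟩ := exists_sum_Icc_neg_ge_of_forall_sum_Icc_ge hD ha hb
    (fun c hc => (hr c hc).1) (fun c hc => (hr c hc).2)
  exact ⟨m, by omega, hsum⟩

/-- If the α-claimed cluster of the origin has size at least n, then there is an
m ≥ n with Σ_{k=−m}^{m} D_k ≥ αm/6. -/
theorem stmt9 (α : ℝ) (hα : 0 < α) (d : ℕ) (hd : 1 ≤ d)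
    (D : ℤ → ℝ) (hD : ∀ k, 0 ≤ D k)
    (claimed : ℤ → Prop)
    (hcl : ∀ i : ℤ, claimed i ↔
      ∃ m : ℕ, 1 ≤ m ∧ α * m ≤ ∑ k ∈ Finset.Icc (i - (m : ℤ)) (i + (m : ℤ)), D k)
    (n : ℕ) (a b : ℤ) (ha : a ≤ 0) (hb : 0 ≤ b)
    (hclu : ∀ j ∈ Finset.Icc a b, claimed j)
    (hsize : (n : ℤ) ≤ b - a + 1) :
    ∃ m : ℕ, n ≤ m ∧ α * m / 6 ≤ ∑ k ∈ Finset.Icc (-(m : ℤ)) (m : ℤ), D k :=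
  stmt9_general α D hD claimed hcl n a b ha hb hclu hsize
end

section
/- Let (D_i)_{i∈ℤ} be a configuration of non-negative integers with D_0 = D, and let (D̂_i) agree with (D_i) except possibly at 0. Fix d ≥ 1 and set D_i^d = max{D_i − d, 0}. Suppose a vertex i with |i| ≥ 2D is 1-claimed in the configuration (D_i) (i.e., Σ_{k=i−m}^{i+m} D_k^d ≥ m for some m ≥ 1). Then i is (1/2)-claimed in the configuration (D̂_i) (i.e., Σ_{k=i−m}^{i+m} D̂_k^d ≥ m/2 for some m ≥ 1). -/
/-!
Away from the origin the two configurations coincide, so a witnessing window avoiding `0`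
is a witness for `Dhat` unchanged. A window containing `0` has radius `m ≥ |i| ≥ 2 D 0`, and
changing the single site `0` costs at most `D 0 ≤ m / 2` of the truncated mass `m`.
-/

open Finset

theorem Finset.sum_le_sum_add_of_eq_of_ne {ι M : Type*} [DecidableEq ι] [AddCommMonoid M]
    [PartialOrder M] [CanonicallyOrderedAdd M] [IsOrderedAddMonoid M]
    {s : Finset ι} {f g : ι → M} {a : ι} (ha : a ∈ s) (hfg : ∀ k ∈ s, k ≠ a → f k = g k) :
    ∑ k ∈ s, f k ≤ ∑ k ∈ s, g k + f a := by
  calc ∑ k ∈ s, f k = ∑ k ∈ s.erase a, g k + f a := by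
        rw [← sum_erase_add s f ha, sum_congr rfl fun k hk ↦ hfg k (mem_of_mem_erase hk)
          (ne_of_mem_erase hk)]
    _ ≤ ∑ k ∈ s, g k + f a := by gcongr; exact erase_subset a s

theorem stmt13_general (d : ℕ) (D : ℤ → ℕ) (Dhat : ℤ → ℕ)
    (hagree : ∀ k : ℤ, k ≠ 0 → Dhat k = D k)
    (i : ℤ) (hi : 2 * (D 0 : ℤ) ≤ |i|)
    (hclaimed : ∃ m : ℕ, 1 ≤ m ∧
      m ≤ ∑ k ∈ Finset.Icc (i - (m : ℤ)) (i + (m : ℤ)), (D k - d)) :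
    ∃ m : ℕ, 1 ≤ m ∧
      m ≤ 2 * ∑ k ∈ Finset.Icc (i - (m : ℤ)) (i + (m : ℤ)), (Dhat k - d) := by
  obtain ⟨m, hm1, hm⟩ := hclaimed
  refine ⟨m, hm1, ?_⟩
  have hsite (k : ℤ) (hk : k ≠ 0) : D k - d = Dhat k - d := by rw [hagree k hk]
  by_cases h0 : (0 : ℤ) ∈ Icc (i - m) (i + m)
  · have hDm : 2 * D 0 ≤ m := by
      rw [mem_Icc] at h0
      have : |i| ≤ m := abs_le.mpr ⟨by omega, by omega⟩
      omega
    have := sum_le_sum_add_of_eq_of_ne h0 fun k _ hk ↦ hsite k hk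
    have := Nat.sub_le (D 0) d
    omega
  · rw [sum_congr rfl fun k hk ↦ hsite k (ne_of_mem_of_not_mem hk h0)] at hm
    omega

/-- Coupling lemma: if a vertex i with |i| ≥ 2D is 1-claimed in the original
configuration, it is (1/2)-claimed in the configuration modified at the origin. -/
theorem stmt13 (d : ℕ) (hd : 1 ≤ d) (D : ℤ → ℕ) (Dhat : ℤ → ℕ)
    (hagree : ∀ k : ℤ, k ≠ 0 → Dhat k = D k)
    (i : ℤ) (hi : 2 * (D 0 : ℤ) ≤ |i|)
    (hclaimed : ∃ m : ℕ, 1 ≤ m ∧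
      m ≤ ∑ k ∈ Finset.Icc (i - (m : ℤ)) (i + (m : ℤ)), (D k - d)) :
    ∃ m : ℕ, 1 ≤ m ∧
      m ≤ 2 * ∑ k ∈ Finset.Icc (i - (m : ℤ)) (i + (m : ℤ)), (Dhat k - d) :=
  stmt13_general d D Dhat hagree i hi hclaimed
end

section
/- Let (X_i^j)_{i∈ℤ} be the stationary {0,1}-valued process X_i^j = 1_{D'_i ≥ j}, where (D'_i) is a stationary sequence of non-negative integers bounded by u, with p_j^+ := P(D'_0 ≥ j) > 0 and infinitely many 1's almost surely for each 1 ≤ j ≤ u. If K_j denotes the distance from 0 to the (2j−1)-th index i > 0 with X_i^j = 1 (set K_j = 0 when D'_0 < j), then E[K_j | D'_0 ≥ j] = (2j−1)/p_j^+, and hence the total T = Σ_{j=1}^u K_j satisfies E[T] ≤ u² < ∞. -/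
/-!
For a stationary process `X` and a set `S`, let `T` be the time of the `m`-th visit to `S` after
time `0`. Then `T = ∑ n, 1{fewer than m visits in [1, n]}`, and shifting time by `-n` turns the
event `{X 0 ∈ S, fewer than m visits in [1, n]}` into `{X (-n) ∈ S, fewer than m visits in
[1 - n, 0]}`, i.e. "`-n` is one of the last `m` visits up to time `0`". A finite stationary measure
gives no mass to "`k` is the first (or last) visit", since these events are disjoint in `k` and
all have the same mass; so almost surely there are infinitely many visits in both directions,
every `ω` lies in exactly `m` of the shifted events, and `E[T; X 0 ∈ S] = m`. For the degree
sequence, `S = [j, ∞)` and `m = 2j - 1`, and `∑_{j ≤ u} (2j - 1) = u²`.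
-/

open MeasureTheory ENNReal

namespace Nat

variable {p : ℕ → Prop} [DecidablePred p]

theorem card_filter_Icc_one_eq_count (n : ℕ) :
    ((Finset.Icc 1 n).filter p).card = count (fun k => p (k + 1)) n := by
  rw [count_eq_card_filter_range]
  refine Finset.card_nbij' (· - 1) (· + 1) ?_ ?_ ?_ ?_ <;>
    intro k hk <;>
    simp only [Finset.coe_filter, Finset.mem_Icc, Finset.mem_range, Set.mem_ofPred_eq] at hk ⊢
  · exact ⟨by omega, by rw [Nat.sub_add_cancel hk.1.1]; exact hk.2⟩
  · exact ⟨by omega, hk.2⟩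
  · omega
  · omega

theorem tsum_ite_and_lt (N : ℕ) :
    ∑' n, (if p n ∧ n < N then 1 else 0 : ℝ≥0∞) = count p N := by
  rw [tsum_eq_sum (s := Finset.range N) fun n hn => if_neg fun h => hn (Finset.mem_range.2 h.2),
    count_eq_card_filter_range, Finset.sum_boole]
  simp only [Finset.filter_congr fun n hn => and_iff_left (Finset.mem_range.1 hn)]

theorem sInf_pos_count_eq_nth_add_one (hp : (Set.ofPred p).Infinite) (m : ℕ) :
    sInf {n | 0 < n ∧ count p n = m + 1} = nth p m + 1 := by
  have hmem : nth p m + 1 ∈ {n | 0 < n ∧ count p n = m + 1} :=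
    ⟨succ_pos _, by rw [count_succ, count_nth_of_infinite hp, if_pos (nth_mem_of_infinite hp m)]⟩
  exact le_antisymm (Nat.sInf_le hmem) (le_csInf ⟨_, hmem⟩ fun n hn =>
    (lt_nth_iff_count_lt hp).1 (hn.2 ▸ lt_add_one m))

theorem tsum_ite_count_lt_add_one (hp : (Set.ofPred p).Infinite) (m : ℕ) :
    ∑' n, (if count p n < m + 1 then 1 else 0 : ℝ≥0∞) = nth p m + 1 := by
  simp_rw [Nat.lt_add_one_iff, count_le_iff_le_nth hp, ← Nat.lt_add_one_iff]
  simpa using tsum_ite_and_lt (p := fun _ => True) (nth p m + 1)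

theorem tsum_ite_and_count_lt (hp : (Set.ofPred p).Infinite) (m : ℕ) :
    ∑' n, (if p n ∧ count p n < m then 1 else 0 : ℝ≥0∞) = m := by
  have key : ∀ n, p n ∧ count p n < m ↔ p n ∧ n < nth p m := fun n =>
    and_congr_right fun hn => by rw [← nth_lt_nth hp, nth_count hn]
  simp_rw [key, tsum_ite_and_lt, count_nth_of_infinite hp]

theorem sum_Icc_two_mul_sub_one (u : ℕ) : ∑ j ∈ Finset.Icc 1 u, (2 * j - 1) = u ^ 2 := by
  induction u with
  | zero => rfl
  | succ u ih =>
    rw [Finset.sum_Icc_succ_top (by omega), ih]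
    grind

theorem count_add_neg_eq_count_neg (f : ℤ → Prop) [DecidablePred f] (n : ℕ) :
    count (fun k => f (↑(k + 1) + -↑n)) n = count (fun k => f (-↑k)) n := by
  simp only [count_eq_card_filter_range]
  refine Finset.card_nbij' (fun k => n - 1 - k) (fun k => n - 1 - k) ?_ ?_ ?_ ?_ <;>
    intro k hk <;> simp only [Finset.coe_filter, Finset.mem_range, Set.mem_ofPred_eq] at hk ⊢
  · refine ⟨by omega, ?_⟩
    convert hk.2 using 2
    omega
  · refine ⟨by omega, ?_⟩
    convert hk.2 using 2
    omega
  · omega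
  · omega

end Nat

namespace Int

variable {H : Set ℤ}

theorem infinite_setOf_natCast_add_one_mem (h : ¬BddAbove H) :
    {k : ℕ | ((k + 1 : ℕ) : ℤ) ∈ H}.Infinite := by
  refine Set.infinite_of_forall_exists_gt fun N => ?_
  obtain ⟨i, hi, hNi⟩ := not_bddAbove_iff.1 h (N + 1)
  refine ⟨i.toNat - 1, ?_, by omega⟩
  change ((i.toNat - 1 + 1 : ℕ) : ℤ) ∈ H
  rwa [show ((i.toNat - 1 + 1 : ℕ) : ℤ) = i by omega]

theorem infinite_setOf_neg_natCast_mem (h : ¬BddBelow H) :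
    {k : ℕ | -(k : ℤ) ∈ H}.Infinite := by
  refine Set.infinite_of_forall_exists_gt fun N => ?_
  obtain ⟨i, hi, hiN⟩ := not_bddBelow_iff.1 h (-N)
  refine ⟨(-i).toNat, ?_, by omega⟩
  change -(((-i).toNat : ℕ) : ℤ) ∈ H
  rwa [show -(((-i).toNat : ℕ) : ℤ) = i by omega]

end Int

theorem measurable_count {α : Type*} [MeasurableSpace α] {P : ℕ → α → Prop}
    [∀ a, DecidablePred fun k => P k a] (hP : ∀ k, MeasurableSet {a | P k a}) (n : ℕ) :
    Measurable fun a => Nat.count (fun k => P k a) n := by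
  induction n with
  | zero => simp only [Nat.count_zero, measurable_const]
  | succ n ih =>
    simp only [Nat.count_succ]
    exact ih.add (Measurable.ite (hP n) measurable_const measurable_const)

section Stationary

variable {Ω β : Type*} [MeasurableSpace Ω] [MeasurableSpace β] {μ : Measure Ω} {X : ℤ → Ω → β}

def IsStationaryProcess (μ : Measure Ω) (X : ℤ → Ω → β) : Prop :=
  ∀ n : ℤ, μ.map (fun ω i => X (i + n) ω) = μ.map (fun ω i => X i ω)

/-- The time of the `m`-th visit of `X` to `S` after time `0`: the least `n > 0` such that
exactly `m` of `X 1, …, X n` lie in `S` (and `0` if there is no such `n`). -/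
noncomputable def visitTime (X : ℤ → Ω → β) (S : Set β) [DecidablePred (· ∈ S)] (m : ℕ)
    (ω : Ω) : ℕ :=
  sInf {n : ℕ | 0 < n ∧ ((Finset.Icc 1 n).filter fun k : ℕ => X k ω ∈ S).card = m}

namespace IsStationaryProcess

variable (hX : ∀ i, Measurable (X i)) (hst : IsStationaryProcess μ X)
include hX hst

theorem measure_shift_preimage {P : Set (ℤ → β)} (hP : MeasurableSet P) (n : ℤ) :
    μ {ω | (fun i => X (i + n) ω) ∈ P} = μ {ω | (fun i => X i ω) ∈ P} := by
  have h := congrArg (· P) (hst n)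
  rwa [Measure.map_apply (measurable_pi_lambda _ fun i => hX _) hP,
    Measure.map_apply (measurable_pi_lambda _ fun i => hX _) hP] at h

theorem neg : IsStationaryProcess μ fun i => X (-i) := by
  intro n
  have hrev : Measurable fun (x : ℤ → β) i => x (-i) :=
    measurable_pi_lambda _ fun i => measurable_pi_apply _
  have hpath : ∀ n : ℤ, Measurable fun ω (i : ℤ) => X (i + n) ω :=
    fun n => measurable_pi_lambda _ fun i => hX _
  calc μ.map (fun ω i => X (-(i + n)) ω)
      = (μ.map fun ω i => X (i + -n) ω).map fun x i => x (-i) := by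
        rw [Measure.map_map hrev (hpath _)]
        simp only [Function.comp_def, neg_add]
    _ = μ.map fun ω i => X (-i) ω := by
        rw [hst, Measure.map_map hrev (by simpa using hpath 0)]
        rfl

variable [IsFiniteMeasure μ]

theorem measure_eq_zero_of_shift_unique {P : Set (ℤ → β)} (hP : MeasurableSet P)
    (huniq : ∀ (x : ℤ → β) (k l : ℤ),
      (fun i => x (i + k)) ∈ P → (fun i => x (i + l)) ∈ P → k = l) :
    μ {ω | (fun i => X i ω) ∈ P} = 0 := by
  set E : ℤ → Set Ω := fun k => {ω | (fun i => X (i + k) ω) ∈ P}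
  have hE : ∀ k, MeasurableSet (E k) := fun k => measurable_pi_lambda _ (fun i => hX _) hP
  have hdisj : Pairwise (Function.onFun Disjoint E) := fun k l hkl =>
    Set.disjoint_left.2 fun ω hk hl => hkl (huniq (fun i => X i ω) k l hk hl)
  by_contra h
  apply measure_ne_top μ (⋃ k, E k)
  rw [measure_iUnion hdisj hE, tsum_congr (hst.measure_shift_preimage hX hP)]
  exact ENNReal.tsum_const_eq_top_of_ne_zero h

variable {S : Set β} (hS : MeasurableSet S)
include hS

theorem ae_not_bddBelow : ∀ᵐ ω ∂μ, {i | X i ω ∈ S}.Nonempty → ¬BddBelow {i | X i ω ∈ S} := by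
  set P : Set (ℤ → β) := {x | x 0 ∈ S ∧ ∀ i, x i ∈ S → 0 ≤ i}
  have hmem : ∀ i, Measurable fun x : ℤ → β => x i ∈ S := fun i =>
    measurableSet_setOfPred.1 (measurable_pi_apply i hS)
  have hP : MeasurableSet P := measurableSet_setOfPred.2
    ((hmem 0).and (Measurable.forall fun i => (hmem i).imp measurable_const))
  have hnull : ∀ k, ∀ᵐ ω ∂μ, (fun i => X (i + k) ω) ∉ P := fun k => by
    rw [ae_iff]
    simp only [not_not]
    rw [hst.measure_shift_preimage hX hP]
    refine hst.measure_eq_zero_of_shift_unique hX hP fun x k l hk hl => ?_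
    have h1 := hk.2 (l - k) (by simpa using hl.1)
    have h2 := hl.2 (k - l) (by simpa using hk.1)
    omega
  filter_upwards [ae_all_iff.2 hnull] with ω hω hne hbdd
  obtain ⟨k, hk, hlow⟩ := hbdd.exists_isLeast_of_nonempty hne
  exact hω k ⟨by simpa using hk, fun i hi => by have := hlow hi; omega⟩

theorem ae_not_bddAbove : ∀ᵐ ω ∂μ, {i | X i ω ∈ S}.Nonempty → ¬BddAbove {i | X i ω ∈ S} := by
  filter_upwards [(hst.neg hX).ae_not_bddBelow (fun i => hX _) hS] with ω hω hne hbdd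
  exact hω hne.neg (bddBelow_neg.2 hbdd)

variable (hinf : ∀ᵐ ω ∂μ, {i | X i ω ∈ S}.Infinite)
include hinf

theorem ae_infinite_future : ∀ᵐ ω ∂μ, {k : ℕ | X ↑(k + 1) ω ∈ S}.Infinite := by
  filter_upwards [hst.ae_not_bddAbove hX hS, hinf] with ω hω hinfω
  exact Int.infinite_setOf_natCast_add_one_mem (hω hinfω.nonempty)

theorem ae_infinite_past : ∀ᵐ ω ∂μ, {k : ℕ | X (-↑k) ω ∈ S}.Infinite := by
  filter_upwards [hst.ae_not_bddBelow hX hS, hinf] with ω hω hinfω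
  exact Int.infinite_setOf_neg_natCast_mem (hω hinfω.nonempty)

variable [DecidablePred (· ∈ S)]

theorem ae_visitTime_eq_tsum {m : ℕ} (hm : m ≠ 0) :
    (fun ω => (visitTime X S m ω : ℝ≥0∞)) =ᵐ[μ]
      fun ω => ∑' n, {ω | Nat.count (fun k => X ↑(k + 1) ω ∈ S) n < m}.indicator 1 ω := by
  obtain ⟨m, rfl⟩ := Nat.exists_eq_add_one_of_ne_zero hm
  filter_upwards [hst.ae_infinite_future hX hS hinf] with ω hω
  simp only [visitTime, Nat.card_filter_Icc_one_eq_count, Nat.sInf_pos_count_eq_nth_add_one hω,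
    Set.indicator_apply, Set.mem_ofPred_eq, Pi.one_apply, Nat.tsum_ite_count_lt_add_one hω]
  push_cast
  rfl

theorem aemeasurable_visitTime {m : ℕ} (hm : m ≠ 0) :
    AEMeasurable (fun ω => (visitTime X S m ω : ℝ≥0∞)) μ := by
  refine AEMeasurable.congr ?_ (hst.ae_visitTime_eq_tsum hX hS hinf hm).symm
  exact (Measurable.tsum fun n => measurable_one.indicator
    (measurable_count (fun k => hX _ hS) n measurableSet_Iio)).aemeasurable

/-- Kac's lemma. -/
theorem setLIntegral_visitTime {m : ℕ} (hm : m ≠ 0) :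
    ∫⁻ ω in {ω | X 0 ω ∈ S}, (visitTime X S m ω : ℝ≥0∞) ∂μ = m * μ Set.univ := by
  have hcount (n : ℕ) : MeasurableSet {x : ℤ → β | Nat.count (fun k => x ↑(k + 1) ∈ S) n < m} :=
    measurable_count (fun k => measurable_pi_apply _ hS) n measurableSet_Iio
  have hfuture (n : ℕ) : MeasurableSet {ω | Nat.count (fun k => X ↑(k + 1) ω ∈ S) n < m} :=
    measurable_count (fun k => hX _ hS) n measurableSet_Iio
  have hpast (n : ℕ) :
      MeasurableSet {ω | X (-↑n) ω ∈ S ∧ Nat.count (fun k => X (-↑k) ω ∈ S) n < m} :=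
    (hX _ hS).inter (measurable_count (fun k => hX _ hS) n measurableSet_Iio)
  have hshift (n : ℕ) :
      μ ({ω | Nat.count (fun k => X ↑(k + 1) ω ∈ S) n < m} ∩ {ω | X 0 ω ∈ S}) =
        μ {ω | X (-↑n) ω ∈ S ∧ Nat.count (fun k => X (-↑k) ω ∈ S) n < m} := by
    have hpath : {ω | X (-↑n) ω ∈ S ∧ Nat.count (fun k => X (-↑k) ω ∈ S) n < m} =
        {ω | (fun i => X (i + -↑n) ω) ∈
          {x | Nat.count (fun k => x ↑(k + 1) ∈ S) n < m} ∩ {x | x 0 ∈ S}} := by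
      ext ω
      simp only [Set.mem_inter_iff, Set.mem_ofPred_eq, zero_add,
        Nat.count_add_neg_eq_count_neg (fun i => X i ω ∈ S), and_comm]
    rw [hpath, hst.measure_shift_preimage hX
      (P := {x | Nat.count (fun k => x ↑(k + 1) ∈ S) n < m} ∩ {x | x 0 ∈ S})
      ((hcount n).inter (measurable_pi_apply 0 hS))]
    rfl
  calc ∫⁻ ω in {ω | X 0 ω ∈ S}, (visitTime X S m ω : ℝ≥0∞) ∂μ
      = ∫⁻ ω in {ω | X 0 ω ∈ S},
          ∑' n, {ω | Nat.count (fun k => X ↑(k + 1) ω ∈ S) n < m}.indicator 1 ω ∂μ :=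
        lintegral_congr_ae (ae_restrict_of_ae (hst.ae_visitTime_eq_tsum hX hS hinf hm))
    _ = ∑' n : ℕ, μ ({ω | Nat.count (fun k => X ↑(k + 1) ω ∈ S) n < m} ∩ {ω | X 0 ω ∈ S}) := by
        rw [lintegral_tsum fun n => (measurable_one.indicator (hfuture n)).aemeasurable]
        simp only [lintegral_indicator_one (hfuture _), Measure.restrict_apply (hfuture _)]
    _ = ∑' n : ℕ, μ {ω | X (-↑n) ω ∈ S ∧ Nat.count (fun k => X (-↑k) ω ∈ S) n < m} :=
        tsum_congr hshift
    _ = ∫⁻ ω, ∑' n : ℕ,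
          {ω | X (-↑n) ω ∈ S ∧ Nat.count (fun k => X (-↑k) ω ∈ S) n < m}.indicator 1 ω ∂μ := by
        rw [lintegral_tsum fun n => (measurable_one.indicator (hpast n)).aemeasurable]
        simp only [lintegral_indicator_one (hpast _)]
    _ = ∫⁻ _, (m : ℝ≥0∞) ∂μ := by
        refine lintegral_congr_ae ?_
        filter_upwards [hst.ae_infinite_past hX hS hinf] with ω hω
        simpa only [Set.indicator_apply, Set.mem_ofPred_eq, Pi.one_apply] using
          Nat.tsum_ite_and_count_lt hω m
    _ = m * μ Set.univ := lintegral_const _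

end IsStationaryProcess

end Stationary

theorem stmt16_general {Ω : Type*} [MeasurableSpace Ω] (ℙ : Measure Ω) [IsProbabilityMeasure ℙ]
    (D' : ℤ → Ω → ℕ) (hmeas : ∀ i, Measurable (D' i))
    (hstat : ∀ n : ℤ,
      Measure.map (fun ω => fun i => D' (i + n) ω) ℙ
        = Measure.map (fun ω => fun i => D' i ω) ℙ)
    (u : ℕ)
    (hinf : ∀ j, 1 ≤ j → j ≤ u → ∀ᵐ ω ∂ℙ, {i : ℤ | j ≤ D' i ω}.Infinite)
    (K : ℕ → Ω → ℕ)
    (hK0 : ∀ j ω, D' 0 ω < j → K j ω = 0)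
    (hK : ∀ j ω, j ≤ D' 0 ω → K j ω =
      sInf {i : ℕ | 0 < i ∧
        ((Finset.Icc 1 i).filter fun k : ℕ => j ≤ D' ((k : ℤ)) ω).card = 2 * j - 1}) :
    (∀ j, 1 ≤ j → j ≤ u →
      (∫⁻ ω in {ω | j ≤ D' 0 ω}, (K j ω : ℝ≥0∞) ∂ℙ) / ℙ {ω | j ≤ D' 0 ω}
        = (2 * j - 1 : ℕ) / ℙ {ω | j ≤ D' 0 ω}) ∧
    ∫⁻ ω, (∑ j ∈ Finset.Icc 1 u, (K j ω : ℝ≥0∞)) ∂ℙ ≤ (u : ℝ≥0∞) ^ 2 := by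
  have hA (j : ℕ) : MeasurableSet {ω | j ≤ D' 0 ω} := hmeas 0 measurableSet_Ici
  have hK_eq (j : ℕ) : (fun ω => (K j ω : ℝ≥0∞)) = {ω | j ≤ D' 0 ω}.indicator
      fun ω => (visitTime D' (Set.Ici j) (2 * j - 1) ω : ℝ≥0∞) := by
    funext ω
    by_cases h : j ≤ D' 0 ω
    · rw [Set.indicator_of_mem (show ω ∈ {ω | j ≤ D' 0 ω} from h), hK j ω h]
      rfl
    · rw [Set.indicator_of_notMem (show ω ∉ {ω | j ≤ D' 0 ω} from h), hK0 j ω (not_le.1 h),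
        Nat.cast_zero]
  have hkac (j : ℕ) (hj : j ∈ Finset.Icc 1 u) :
      ∫⁻ ω in {ω | j ≤ D' 0 ω}, (visitTime D' (Set.Ici j) (2 * j - 1) ω : ℝ≥0∞) ∂ℙ
        = (2 * j - 1 : ℕ) := by
    obtain ⟨hj1, hju⟩ := Finset.mem_Icc.1 hj
    have := IsStationaryProcess.setLIntegral_visitTime (S := Set.Ici j) (m := 2 * j - 1) hmeas
      hstat measurableSet_Ici (hinf j hj1 hju) (by omega)
    rwa [measure_univ, mul_one] at this
  refine ⟨fun j hj1 hju => ?_, ?_⟩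
  · rw [hK_eq, setLIntegral_indicator (hA j), Set.inter_self,
      hkac j (Finset.mem_Icc.2 ⟨hj1, hju⟩)]
  · have hmeasK (j : ℕ) (hj : j ∈ Finset.Icc 1 u) :
        AEMeasurable (fun ω => (K j ω : ℝ≥0∞)) ℙ := by
      obtain ⟨hj1, hju⟩ := Finset.mem_Icc.1 hj
      rw [hK_eq]
      exact (IsStationaryProcess.aemeasurable_visitTime (S := Set.Ici j) hmeas hstat
        measurableSet_Ici (hinf j hj1 hju) (by omega)).indicator (hA j)
    have hintK (j : ℕ) (hj : j ∈ Finset.Icc 1 u) :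
        ∫⁻ ω, (K j ω : ℝ≥0∞) ∂ℙ = (2 * j - 1 : ℕ) := by
      rw [hK_eq, lintegral_indicator (hA j), hkac j hj]
    rw [lintegral_finsetSum' _ hmeasK, Finset.sum_congr rfl hintK, ← Nat.cast_sum,
      Nat.sum_Icc_two_mul_sub_one, Nat.cast_pow]

/-- Proposition 3 of the paper: in the CT model applied to a stationary bounded
degree sequence, each level-j edge has conditional mean length (2j−1)/p_j⁺ and
the expected total edge length at the origin is at most u². -/
theorem stmt16 {Ω : Type*} [MeasurableSpace Ω] (ℙ : Measure Ω) [IsProbabilityMeasure ℙ]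
    (D' : ℤ → Ω → ℕ) (hmeas : ∀ i, Measurable (D' i))
    (hstat : ∀ n : ℤ,
      Measure.map (fun ω => fun i => D' (i + n) ω) ℙ
        = Measure.map (fun ω => fun i => D' i ω) ℙ)
    (u : ℕ) (hbd : ∀ i ω, D' i ω ≤ u)
    (hpos : ∀ j, 1 ≤ j → j ≤ u → 0 < ℙ {ω | j ≤ D' 0 ω})
    (hinf : ∀ j, 1 ≤ j → j ≤ u → ∀ᵐ ω ∂ℙ, {i : ℤ | j ≤ D' i ω}.Infinite)
    (K : ℕ → Ω → ℕ)
    (hK0 : ∀ j ω, D' 0 ω < j → K j ω = 0)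
    (hK : ∀ j ω, j ≤ D' 0 ω → K j ω =
      sInf {i : ℕ | 0 < i ∧
        ((Finset.Icc 1 i).filter fun k : ℕ => j ≤ D' ((k : ℤ)) ω).card = 2 * j - 1}) :
    (∀ j, 1 ≤ j → j ≤ u →
      (∫⁻ ω in {ω | j ≤ D' 0 ω}, (K j ω : ℝ≥0∞) ∂ℙ) / ℙ {ω | j ≤ D' 0 ω}
        = (2 * j - 1 : ℕ) / ℙ {ω | j ≤ D' 0 ω}) ∧
    ∫⁻ ω, (∑ j ∈ Finset.Icc 1 u, (K j ω : ℝ≥0∞)) ∂ℙ ≤ (u : ℝ≥0∞) ^ 2 :=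
  stmt16_general ℙ D' hmeas hstat u hinf K hK0 hK
end
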